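/- arXiv:math/0012196 — 6 statements merged into one kernel-verified Lean document; each statement's English description precedes it below -/
import Mathlib

section
/- For all integers n and k the following holds in the ring R_K3. Let ch(i_*L) := n·σ + k·F + n·p (the Chern character, computed via Grothendieck–Riemann–Roch, of the pushforward of a line bundle L on a spectral curve C = nσ + kF on an elliptic K3 surface) and ch(V) := n·1 − k·p (the Chern character of its rank-n fibrewise Fourier–Mukai transform V). Then ch(V)·(1+F) = n·1 + n·F − k·p, and its component vector (n, 0, n, −k) in the basis (1, σ, F, p) equals M4 applied to the component vector (0, n, k, n) of ch(i_*L). In other words, the O(F)-twisted fibrewise Fourier–Mukai transform T on an elliptic K3 acts on Chern characters by the adiabatic matrix M4: ch(T^0(i_*L)) = ch(V)·(1+F) = M4·ch(i_*L). -/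
/-- The 4-dimensional commutative ℚ-algebra `R_K3` with basis `(1, σ, F, p)`,
modelling the even rational cohomology of an elliptically fibered K3 surface
with section `σ`, fibre class `F` and point class `p`. -/
structure RK3 where
  c1 : ℚ   -- coefficient of 1
  cσ : ℚ   -- coefficient of σ
  cF : ℚ   -- coefficient of F
  cp : ℚ   -- coefficient of p

namespace RK3

/-- Multiplication determined by `σ² = −2p`, `σ·F = p`, `F² = 0` and
`σ·p = F·p = p² = 0`. -/
def mul (u v : RK3) : RK3 where
  c1 := u.c1 * v.c1
  cσ := u.c1 * v.cσ + u.cσ * v.c1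
  cF := u.c1 * v.cF + u.cF * v.c1
  cp := u.c1 * v.cp + u.cp * v.c1 - 2 * (u.cσ * v.cσ) + u.cσ * v.cF + u.cF * v.cσ

/-- Component vector with respect to the ordered basis `(1, σ, F, p)`. -/
def vec (u : RK3) : Fin 4 → ℚ := ![u.c1, u.cσ, u.cF, u.cp]

end RK3

/-- The adiabatic matrix `M4 = [[0,1,0,0],[−1,0,0,0],[0,0,0,1],[0,0,−1,0]]`. -/
def M4 : Matrix (Fin 4) (Fin 4) ℚ := !![0,1,0,0; -1,0,0,0; 0,0,0,1; 0,0,-1,0]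

namespace RK3

theorem mul_one_add_fibre (u : RK3) :
    u.mul ⟨1, 0, 1, 0⟩ = ⟨u.c1, u.cσ, u.cF + u.c1, u.cp + u.cσ⟩ := by
  simp only [mul, mk.injEq]
  refine ⟨?_, ?_, ?_, ?_⟩ <;> ring

end RK3

theorem M4_mulVec_vec (u : RK3) : M4.mulVec u.vec = ![u.cσ, -u.c1, u.cp, -u.cF] := by
  ext i
  fin_cases i <;> simp [M4, RK3.vec, Matrix.mulVec, dotProduct, Fin.sum_univ_four]

/-- For all integers `n, k`, with `ch(i_*L) = n·σ + k·F + n·p`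
(Chern character of the pushforward of a line bundle `L` on a spectral curve
`C = nσ + kF` on an elliptic K3) and `ch(V) = n·1 − k·p` (Chern character of
its rank-`n` fibrewise Fourier–Mukai transform), one has
`ch(V)·(1+F) = n·1 + n·F − k·p`, whose component vector `(n, 0, n, −k)` in the
basis `(1, σ, F, p)` equals `M4` applied to the component vector `(0, n, k, n)`
of `ch(i_*L)`: the `O(F)`-twisted fibrewise Fourier–Mukai transform `T` on an
elliptic K3 acts on Chern characters by the adiabatic matrix `M4`. -/
theorem k3_fm_adiabatic (n k : ℤ) :
    (⟨(n : ℚ), 0, 0, -(k : ℚ)⟩ : RK3).mul ⟨1, 0, 1, 0⟩ =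
        ⟨(n : ℚ), 0, (n : ℚ), -(k : ℚ)⟩ ∧
    RK3.vec ((⟨(n : ℚ), 0, 0, -(k : ℚ)⟩ : RK3).mul ⟨1, 0, 1, 0⟩) =
        M4.mulVec (RK3.vec ⟨0, (n : ℚ), (k : ℚ), (n : ℚ)⟩) := by
  have twist : (⟨(n : ℚ), 0, 0, -(k : ℚ)⟩ : RK3).mul ⟨1, 0, 1, 0⟩ =
      ⟨(n : ℚ), 0, (n : ℚ), -(k : ℚ)⟩ := by
    simp [RK3.mul_one_add_fibre]
  refine ⟨twist, ?_⟩
  rw [twist, M4_mulVec_vec]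
  simp [RK3.vec]
end

section
/- For every gamma in R with components (n, x, S, eta, a, s), the product Td(N)·Shat(gamma) in R has components (x, −n, eta, −S, s − (x/12)<c1,c1>, −a + x<c1,c1>). -/
/-!
Model `R` of the vertical even rational cohomology of an elliptically fibered
Calabi–Yau threefold `π : X → B` with section `σ`.  An element
`γ = n·1 + x·σ + S + σ·η + a·F + s·σF` (with `n, x, a, s ∈ ℚ` and `S, η ∈ A2`,
where `A2` models `H²(B)` with intersection form `B` and `c1` models `π*c1(B)`)
is recorded by its components `(n, x, S, η, a, s)`.
-/
structure R6 (A2 : Type*) where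
  n : ℚ
  x : ℚ
  S : A2
  eta : A2
  a : ℚ
  s : ℚ

namespace R6

variable {A2 : Type*} [AddCommGroup A2] [Module ℚ A2]

/-- The multiplication of `R`, induced by the relations `S·S' = ⟨S,S'⟩·F` for
`S, S' ∈ A2`, `F·A2 = 0`, `F² = 0` and `σ² = −c1·σ`. -/
def mul (B : A2 →ₗ[ℚ] A2 →ₗ[ℚ] ℚ) (c1 : A2) (γ γ' : R6 A2) : R6 A2 where
  n := γ.n * γ'.n
  x := γ.n * γ'.x + γ.x * γ'.n
  S := γ.n • γ'.S + γ'.n • γ.S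
  eta := γ.n • γ'.eta + γ'.n • γ.eta + γ.x • γ'.S + γ'.x • γ.S - (γ.x * γ'.x) • c1
  a := γ.n * γ'.a + γ'.n * γ.a + B γ.S γ'.S
  s := γ.n * γ'.s + γ'.n * γ.s + γ.x * γ'.a + γ'.x * γ.a
      - γ.x * B c1 γ'.eta - γ'.x * B c1 γ.eta + B γ.S γ'.eta + B γ'.S γ.eta

/-- Todd class of the normal bundle of the section:
`Td(N) = 1 − c1/2 + c1²/12`, with `c1² = ⟨c1,c1⟩·F`. -/
def TdN (B : A2 →ₗ[ℚ] A2 →ₗ[ℚ] ℚ) (c1 : A2) : R6 A2 :=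
  ⟨1, 0, (-(1/2) : ℚ) • c1, 0, B c1 c1 / 12, 0⟩

/-- Chern character of the inverse relative Fourier–Mukai transform (the paper's
GRR computation): for `γ` with components `(n, x, S, η, a, s)`,
`Ŝ(γ) = x·1 + (−n·σ + η + (x/2)c1) + σ·(−(n/2)c1 − S)
  + (s + ⟨η,c1⟩/2 + (x/12)⟨c1,c1⟩)·F
  + (−(n/6)⟨c1,c1⟩ − a − ⟨c1,S⟩/2 + x·⟨c1,c1⟩)·σF`. -/
def Shat (B : A2 →ₗ[ℚ] A2 →ₗ[ℚ] ℚ) (c1 : A2) (γ : R6 A2) : R6 A2 :=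
  ⟨γ.x, -γ.n, γ.eta + (γ.x / 2) • c1, -((γ.n / 2) • c1) - γ.S,
   γ.s + B γ.eta c1 / 2 + (γ.x / 12) * B c1 c1,
   -(γ.n / 6) * B c1 c1 - γ.a - B c1 γ.S / 2 + γ.x * B c1 c1⟩

end R6

namespace R6

variable {A2 : Type*} [AddCommGroup A2] [Module ℚ A2]

theorem tdN_mul (B : A2 →ₗ[ℚ] A2 →ₗ[ℚ] ℚ) (c1 : A2) (γ : R6 A2) :
    mul B c1 (TdN B c1) γ =
      ⟨γ.n, γ.x, γ.S - (γ.n / 2) • c1, γ.eta - (γ.x / 2) • c1,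
       γ.a + γ.n / 12 * B c1 c1 - B c1 γ.S / 2,
       γ.s + γ.x / 12 * B c1 c1 - B c1 γ.eta / 2⟩ := by
  simp only [mul, TdN, mk.injEq, map_smul, map_zero, LinearMap.smul_apply, smul_eq_mul]
  refine ⟨one_mul _, by ring, by module, by module, by ring, by ring⟩

end R6

/-- For every `γ` in `R` with components `(n, x, S, η, a, s)`, the
product `Td(N)·Ŝ(γ)` in `R` has components
`(x, −n, η, −S, s − (x/12)⟨c1,c1⟩, −a + x⟨c1,c1⟩)`. -/
theorem tdN_mul_shat {A2 : Type*} [AddCommGroup A2] [Module ℚ A2]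
    (B : A2 →ₗ[ℚ] A2 →ₗ[ℚ] ℚ) (hB : ∀ u v : A2, B u v = B v u) (c1 : A2)
    (γ : R6 A2) :
    R6.mul B c1 (R6.TdN B c1) (R6.Shat B c1 γ) =
      ⟨γ.x, -γ.n, γ.eta, -γ.S,
       γ.s - (γ.x / 12) * B c1 c1, -γ.a + γ.x * B c1 c1⟩ := by
  rw [R6.tdN_mul, R6.Shat]
  congr 1
  · exact add_sub_cancel_right _ _
  · module
  · simp only [map_add, map_smul, smul_eq_mul, hB γ.eta c1]
    ring
  · simp only [map_sub, map_neg, map_smul, smul_eq_mul]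
    ring
end

section
/- Set Td(N⁻¹) := 1 + c1/2 + c1²/12 in R (the Todd class of the dual line bundle N⁻¹ = K_B⁻¹). For every gamma in R whose components are (n, 0, S, eta, a, s) (fibre degree zero, x = 0), one has Td(N⁻¹)·Sfm(gamma) = M(gamma); that is, the Td(N⁻¹)-twisted cohomological direct fibrewise Fourier–Mukai transform sends the component vector (n, 0, S, eta, a, s) to (0, −n, eta, −S, s, −a), acting by the adiabatic block-antidiagonal matrix M. -/
namespace R6

variable {A2 : Type*} [AddCommGroup A2] [Module ℚ A2]

/-- Todd class of the dual of the normal bundle of the section: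
`Td(N⁻¹) = 1 + c1/2 + c1²/12`, with `c1² = ⟨c1,c1⟩·F`. -/
def TdNinv (B : A2 →ₗ[ℚ] A2 →ₗ[ℚ] ℚ) (c1 : A2) : R6 A2 :=
  ⟨1, 0, ((1/2) : ℚ) • c1, 0, B c1 c1 / 12, 0⟩

/-- Chern character of the direct relative Fourier–Mukai transform (the paper's
GRR computation): for `γ` with components `(n, x, S, η, a, s)`,
`S(γ) = x·1 + (−n·σ + η − (x/2)c1) + σ·((n/2)c1 − S)
  + (s − ⟨η,c1⟩/2 + (x/12)⟨c1,c1⟩)·F + (−(n/6)⟨c1,c1⟩ − a + ⟨c1,S⟩/2)·σF`. -/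
def Sfm (B : A2 →ₗ[ℚ] A2 →ₗ[ℚ] ℚ) (c1 : A2) (γ : R6 A2) : R6 A2 :=
  ⟨γ.x, -γ.n, γ.eta - (γ.x / 2) • c1, (γ.n / 2) • c1 - γ.S,
   γ.s - B γ.eta c1 / 2 + (γ.x / 12) * B c1 c1,
   -(γ.n / 6) * B c1 c1 - γ.a + B c1 γ.S / 2⟩

/-- The adiabatic block-antidiagonal matrix `M`: the ℚ-linear map on `R` sending
components `(n, x, S, η, a, s)` to `(x, −n, η, −S, s, −a)`. -/
def Mmap (γ : R6 A2) : R6 A2 := ⟨γ.x, -γ.n, γ.eta, -γ.S, γ.s, -γ.a⟩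

end R6

namespace R6

variable {A2 : Type*} [AddCommGroup A2] [Module ℚ A2]

theorem tdNinv_mul (B : A2 →ₗ[ℚ] A2 →ₗ[ℚ] ℚ) (c1 : A2) (γ : R6 A2) :
    mul B c1 (TdNinv B c1) γ =
      ⟨γ.n, γ.x, γ.S + (γ.n / 2) • c1, γ.eta + (γ.x / 2) • c1,
        γ.a + γ.n * B c1 c1 / 12 + B c1 γ.S / 2,
        γ.s + γ.x * B c1 c1 / 12 + B c1 γ.eta / 2⟩ := by
  simp only [mul, TdNinv, mk.injEq]
  refine ⟨by ring, by ring, by module, by module, ?_, ?_⟩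
  · simp only [map_smul, LinearMap.smul_apply, smul_eq_mul]
    ring
  · simp only [map_zero, map_smul, LinearMap.smul_apply, smul_eq_mul]
    ring

end R6

/-- For every `γ` in `R` of fibre degree zero (`x = 0`), one has
`Td(N⁻¹)·S(γ) = M(γ)`:  the `Td(N⁻¹)`-twisted cohomological direct fibrewise
Fourier–Mukai transform sends `(n, 0, S, η, a, s)` to `(0, −n, η, −S, s, −a)`,
acting by the adiabatic block-antidiagonal matrix `M`. -/
theorem tdNinv_mul_sfm_eq_M {A2 : Type*} [AddCommGroup A2] [Module ℚ A2]
    (B : A2 →ₗ[ℚ] A2 →ₗ[ℚ] ℚ) (hB : ∀ u v : A2, B u v = B v u) (c1 : A2)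
    (γ : R6 A2) (hx : γ.x = 0) :
    R6.mul B c1 (R6.TdNinv B c1) (R6.Sfm B c1 γ) = R6.Mmap γ := by
  rw [R6.tdNinv_mul]
  simp only [R6.Sfm, R6.Mmap, hx, R6.mk.injEq, true_and]
  -- The `⟨c1, c1⟩` terms of the last component cancel because `-1/6 - 1/12 + 1/4 = 0`.
  refine ⟨by module, by module, ?_, ?_⟩
  · simp only [map_sub, map_smul, smul_eq_mul, hB γ.eta c1]
    ring
  · simp only [map_sub, map_smul, smul_eq_mul]
    ring
end

section
/- Let t := 1 − (1/4)c1 + (1/96)c1² in R. Then t² = Td(N), and t is invertible in R with t⁻¹ = 1 + (1/4)c1 + (5/96)c1². Moreover, for every gamma in R whose components are (n, 0, S, eta, a, s) (fibre degree zero, x = 0), defining the twisted charges Q(gamma) := gamma·t⁻¹ and Q^(gamma) := Shat(gamma)·t, one has Q^(gamma) = M(Q(gamma)); that is, with the square-root-of-Td(N) twisted charge, the inverse fibrewise Fourier–Mukai transform acts on charges exactly by the adiabatic matrix M. -/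
namespace R6

variable {A2 : Type*} [AddCommGroup A2] [Module ℚ A2]

/-- The unit `1` of `R`. -/
def one : R6 A2 := ⟨1, 0, 0, 0, 0, 0⟩

/-- The square root `t := 1 − (1/4)c1 + (1/96)c1²` of `Td(N)`. -/
def tRoot (B : A2 →ₗ[ℚ] A2 →ₗ[ℚ] ℚ) (c1 : A2) : R6 A2 :=
  ⟨1, 0, (-(1/4) : ℚ) • c1, 0, B c1 c1 / 96, 0⟩

/-- The claimed inverse `t⁻¹ = 1 + (1/4)c1 + (5/96)c1²` of `t`. -/
def tRootInv (B : A2 →ₗ[ℚ] A2 →ₗ[ℚ] ℚ) (c1 : A2) : R6 A2 :=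
  ⟨1, 0, ((1/4) : ℚ) • c1, 0, 5 * B c1 c1 / 96, 0⟩

end R6

/-! The map `M` is `A`-linear.  On classes of fibre degree zero, `Ŝ` is `M` followed by
multiplication with `Td(N)⁻¹ = 1 + c1/2 + c1²/6`; since `Td(N)⁻¹ · t = t⁻¹` in `ℚ[c1]/(c1³)`,
this gives `Ŝ(γ)·t = M(γ)·Td(N)⁻¹·t = M(γ)·t⁻¹ = M(γ·t⁻¹)`. -/

namespace R6

variable {A2 : Type*} [AddCommGroup A2] [Module ℚ A2] {B : A2 →ₗ[ℚ] A2 →ₗ[ℚ] ℚ} {c1 : A2}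

omit [AddCommGroup A2] [Module ℚ A2] in
@[ext]
theorem ext {γ γ' : R6 A2} (hn : γ.n = γ'.n) (hx : γ.x = γ'.x) (hS : γ.S = γ'.S)
    (heta : γ.eta = γ'.eta) (ha : γ.a = γ'.a) (hs : γ.s = γ'.s) : γ = γ' := by
  cases γ; cases γ'; congr

/-- The class `α·1 + S + a·F ∈ A`. -/
def ofBase (α : ℚ) (S : A2) (a : ℚ) : R6 A2 := ⟨α, 0, S, 0, a, 0⟩

theorem mul_ofBase_assoc (hB : ∀ u v : A2, B u v = B v u) (γ : R6 A2) {α α' : ℚ} {S S' : A2}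
    {a a' : ℚ} :
    mul B c1 (mul B c1 γ (ofBase α S a)) (ofBase α' S' a') =
      mul B c1 γ (mul B c1 (ofBase α S a) (ofBase α' S' a')) := by
  ext <;> simp only [mul, ofBase, mul_zero, zero_mul, zero_add, add_zero, sub_zero, smul_zero,
    zero_smul, map_zero, smul_add, map_add, map_smul, LinearMap.add_apply, LinearMap.smul_apply,
    smul_eq_mul, hB S' S] <;> first | module | ring

theorem Mmap_mul_ofBase (hB : ∀ u v : A2, B u v = B v u) (γ : R6 A2) {α : ℚ} {S : A2} {a : ℚ} :
    Mmap (mul B c1 γ (ofBase α S a)) = mul B c1 (Mmap γ) (ofBase α S a) := by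
  ext <;> simp only [Mmap, mul, ofBase, mul_zero, zero_mul, zero_add, add_zero, sub_zero, smul_zero,
    zero_smul, map_zero, map_neg, LinearMap.neg_apply, hB S] <;> first | module | ring

variable (B c1) in
/-- The class `α + β·c1 + δ·c1²`, where `c1² = ⟨c1, c1⟩·F`. -/
def polyC1 (α β δ : ℚ) : R6 A2 := ofBase α (β • c1) (δ * B c1 c1)

theorem polyC1_mul_polyC1 (α β δ α' β' δ' : ℚ) :
    mul B c1 (polyC1 B c1 α β δ) (polyC1 B c1 α' β' δ') =
      polyC1 B c1 (α * α') (α * β' + α' * β) (α * δ' + α' * δ + β * β') := by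
  ext <;> simp only [mul, polyC1, ofBase, mul_zero, zero_mul, add_zero, smul_zero, zero_smul,
    sub_self, map_smul, LinearMap.smul_apply, smul_eq_mul, map_zero] <;> first | module | ring

variable (B c1) in
theorem one_eq_polyC1 : (one : R6 A2) = polyC1 B c1 1 0 0 := by
  simp [one, polyC1, ofBase]

theorem TdN_eq_polyC1 : TdN B c1 = polyC1 B c1 1 (-(1/2)) (1/12) := by
  rw [TdN, polyC1, ofBase, one_div_mul_eq_div]

theorem tRoot_eq_polyC1 : tRoot B c1 = polyC1 B c1 1 (-(1/4)) (1/96) := by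
  rw [tRoot, polyC1, ofBase, one_div_mul_eq_div]

theorem tRootInv_eq_polyC1 : tRootInv B c1 = polyC1 B c1 1 (1/4) (5/96) := by
  rw [tRootInv, polyC1, ofBase, div_mul_eq_mul_div]

theorem tRoot_mul_tRoot : mul B c1 (tRoot B c1) (tRoot B c1) = TdN B c1 := by
  rw [tRoot_eq_polyC1, polyC1_mul_polyC1, TdN_eq_polyC1]; norm_num

theorem tRoot_mul_tRootInv : mul B c1 (tRoot B c1) (tRootInv B c1) = one := by
  rw [tRoot_eq_polyC1, tRootInv_eq_polyC1, polyC1_mul_polyC1, one_eq_polyC1 B c1]; norm_num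

theorem tRootInv_mul_tRoot : mul B c1 (tRootInv B c1) (tRoot B c1) = one := by
  rw [tRoot_eq_polyC1, tRootInv_eq_polyC1, polyC1_mul_polyC1, one_eq_polyC1 B c1]; norm_num

variable (B c1) in
def TdNInv : R6 A2 := polyC1 B c1 1 (1/2) (1/6)

theorem TdNInv_mul_tRoot : mul B c1 (TdNInv B c1) (tRoot B c1) = tRootInv B c1 := by
  rw [TdNInv, tRoot_eq_polyC1, tRootInv_eq_polyC1, polyC1_mul_polyC1]; norm_num

theorem Shat_eq_Mmap_mul_TdNInv {γ : R6 A2} (hx : γ.x = 0) :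
    Shat B c1 γ = mul B c1 (Mmap γ) (TdNInv B c1) := by
  ext <;> simp only [Shat, Mmap, mul, TdNInv, polyC1, ofBase, hx, zero_div, zero_smul, zero_mul,
    neg_mul, one_div, mul_one, mul_zero, zero_add, add_zero, one_smul, smul_zero, smul_neg,
    neg_smul, sub_zero, one_mul, map_smul, smul_eq_mul, mul_neg, map_zero, map_neg, neg_zero,
    LinearMap.smul_apply] <;> first | module | ring

theorem Shat_mul_tRoot (hB : ∀ u v : A2, B u v = B v u) {γ : R6 A2} (hx : γ.x = 0) :
    mul B c1 (Shat B c1 γ) (tRoot B c1) = Mmap (mul B c1 γ (tRootInv B c1)) :=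
  calc mul B c1 (Shat B c1 γ) (tRoot B c1)
      = mul B c1 (mul B c1 (Mmap γ) (TdNInv B c1)) (tRoot B c1) := by
        rw [Shat_eq_Mmap_mul_TdNInv hx]
    _ = mul B c1 (Mmap γ) (mul B c1 (TdNInv B c1) (tRoot B c1)) := mul_ofBase_assoc hB _
    _ = mul B c1 (Mmap γ) (tRootInv B c1) := by rw [TdNInv_mul_tRoot]
    _ = Mmap (mul B c1 γ (tRootInv B c1)) := (Mmap_mul_ofBase hB _).symm

end R6

/-- With `t := 1 − (1/4)c1 + (1/96)c1²` one has `t² = Td(N)`, `t`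
is invertible with inverse `t⁻¹ = 1 + (1/4)c1 + (5/96)c1²`, and for every `γ`
of fibre degree zero (`x = 0`), the twisted charges `Q(γ) := γ·t⁻¹` and
`Q̂(γ) := Ŝ(γ)·t` satisfy `Q̂(γ) = M(Q(γ))`:  with the `√Td(N)`-twisted charge
the inverse fibrewise Fourier–Mukai transform acts exactly by the adiabatic
matrix `M`. -/
theorem sqrt_tdN_twisted_charge {A2 : Type*} [AddCommGroup A2] [Module ℚ A2]
    (B : A2 →ₗ[ℚ] A2 →ₗ[ℚ] ℚ) (hB : ∀ u v : A2, B u v = B v u) (c1 : A2) :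
    R6.mul B c1 (R6.tRoot B c1) (R6.tRoot B c1) = R6.TdN B c1 ∧
    R6.mul B c1 (R6.tRoot B c1) (R6.tRootInv B c1) = R6.one ∧
    R6.mul B c1 (R6.tRootInv B c1) (R6.tRoot B c1) = R6.one ∧
    ∀ γ : R6 A2, γ.x = 0 →
      R6.mul B c1 (R6.Shat B c1 γ) (R6.tRoot B c1) =
        R6.Mmap (R6.mul B c1 γ (R6.tRootInv B c1)) :=
  ⟨R6.tRoot_mul_tRoot, R6.tRoot_mul_tRootInv, R6.tRootInv_mul_tRoot,
    fun _ hx => R6.Shat_mul_tRoot hB hx⟩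
end

section
/- For every gamma in R with components (n, x, S, eta, a, s), define chI(gamma) := (x − n)·1 + (−x·sigma − S + (n − x/2)·c1 + eta) + (−sigma·eta + (s − a − (n/2 − x/12)<c1,c1> + <c1,S> − <eta,c1>/2)·F) + (−s)·sigma F (the paper's Chern character of the Fourier–Mukai transform with kernel the ideal sheaf of the diagonal of the fibre product X ×_B X) and chJ(gamma) := (s + <c1,S> + (x/12)(c2 − <c1,c1>) − x)·1 + (−n·c1 − eta + (x/2)·c1) + ((n/2 − x/12)<c1,c1> − <c1,S> + <eta,c1>/2 − s)·F (the paper's Chern character of the transform with kernel the ideal sheaf J of X ×_B X inside X × X). Then chI(gamma) + chJ(gamma) = Int(gamma·Td(X))·1 − gamma, i.e. the two relative transforms add up to the Kontsevich conifold transform with kernel the ideal sheaf of the diagonal of X × X. -/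
namespace R6

variable {A2 : Type*} [AddCommGroup A2] [Module ℚ A2]

instance : Add (R6 A2) :=
  ⟨fun u v => ⟨u.n + v.n, u.x + v.x, u.S + v.S, u.eta + v.eta, u.a + v.a, u.s + v.s⟩⟩

instance : Sub (R6 A2) :=
  ⟨fun u v => ⟨u.n - v.n, u.x - v.x, u.S - v.S, u.eta - v.eta, u.a - v.a, u.s - v.s⟩⟩

instance : SMul ℚ (R6 A2) :=
  ⟨fun q u => ⟨q * u.n, q * u.x, q • u.S, q • u.eta, q * u.a, q * u.s⟩⟩

instance : One (R6 A2) := ⟨⟨1, 0, 0, 0, 0, 0⟩⟩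

/-- `Td(X) = 1 + c2(X)/12` where `c2(X) = 12·σ·c1 + 11·c1² + c2·F`
(and `c1² = ⟨c1,c1⟩·F`). -/
def TdX (B : A2 →ₗ[ℚ] A2 →ₗ[ℚ] ℚ) (c1 : A2) (c2 : ℚ) : R6 A2 :=
  ⟨1, 0, 0, c1, (11 * B c1 c1 + c2) / 12, 0⟩

/-- Integration over `X`: the `σF`-coefficient. -/
def Int (γ : R6 A2) : ℚ := γ.s

/-- The paper's Chern character of the Fourier–Mukai transform with kernel the
ideal sheaf of the diagonal of the fibre product `X ×_B X`:
`chI(γ) = (x−n)·1 + (−x·σ − S + (n − x/2)·c1 + η)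
  + (−σ·η + (s − a − (n/2 − x/12)⟨c1,c1⟩ + ⟨c1,S⟩ − ⟨η,c1⟩/2)·F) + (−s)·σF`. -/
def chI (B : A2 →ₗ[ℚ] A2 →ₗ[ℚ] ℚ) (c1 : A2) (γ : R6 A2) : R6 A2 :=
  ⟨γ.x - γ.n, -γ.x, -γ.S + (γ.n - γ.x / 2) • c1 + γ.eta, -γ.eta,
   γ.s - γ.a - (γ.n / 2 - γ.x / 12) * B c1 c1 + B c1 γ.S - B γ.eta c1 / 2,
   -γ.s⟩

/-- The paper's Chern character of the transform with kernel the ideal sheaf `J`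
of `X ×_B X` inside `X × X`:
`chJ(γ) = (s + ⟨c1,S⟩ + (x/12)(c2 − ⟨c1,c1⟩) − x)·1 + (−n·c1 − η + (x/2)·c1)
  + ((n/2 − x/12)⟨c1,c1⟩ − ⟨c1,S⟩ + ⟨η,c1⟩/2 − s)·F`. -/
def chJ (B : A2 →ₗ[ℚ] A2 →ₗ[ℚ] ℚ) (c1 : A2) (c2 : ℚ) (γ : R6 A2) : R6 A2 :=
  ⟨γ.s + B c1 γ.S + (γ.x / 12) * (c2 - B c1 c1) - γ.x, 0,
   -(γ.n • c1) - γ.eta + (γ.x / 2) • c1, 0,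
   (γ.n / 2 - γ.x / 12) * B c1 c1 - B c1 γ.S + B γ.eta c1 / 2 - γ.s, 0⟩

end R6

/-!
Adding the two transforms, everything except the constant term cancels against `-γ`, and
the constant term is `s + ⟨c1,S⟩ + x(c2 - ⟨c1,c1⟩)/12`. Multiplying by `Td(X)` and taking the
`σF`-coefficient gives the same number, once `⟨S,c1⟩ = ⟨c1,S⟩`.
-/

namespace R6

variable {A2 : Type*} [AddCommGroup A2]

theorem add_def (u v : R6 A2) :
    u + v = ⟨u.n + v.n, u.x + v.x, u.S + v.S, u.eta + v.eta, u.a + v.a, u.s + v.s⟩ := rfl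

theorem sub_def (u v : R6 A2) :
    u - v = ⟨u.n - v.n, u.x - v.x, u.S - v.S, u.eta - v.eta, u.a - v.a, u.s - v.s⟩ := rfl

variable [Module ℚ A2]

theorem smul_one_eq_mk (q : ℚ) : q • (1 : R6 A2) = ⟨q, 0, 0, 0, 0, 0⟩ := by
  change (⟨q * 1, q * 0, q • 0, q • 0, q * 0, q * 0⟩ : R6 A2) = _
  simp only [mul_one, mul_zero, smul_zero]

variable (B : A2 →ₗ[ℚ] A2 →ₗ[ℚ] ℚ) (c1 : A2) (c2 : ℚ) (γ : R6 A2)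

theorem int_mul_tdX :
    Int (mul B c1 γ (TdX B c1 c2)) = γ.s + B γ.S c1 + γ.x / 12 * (c2 - B c1 c1) := by
  simp only [Int, mul, TdX, map_zero, LinearMap.zero_apply]
  ring

theorem chI_add_chJ_eq :
    chI B c1 γ + chJ B c1 c2 γ =
      (γ.s + B c1 γ.S + γ.x / 12 * (c2 - B c1 c1)) • (1 : R6 A2) - γ := by
  rw [chI, chJ, add_def, smul_one_eq_mk, sub_def]
  congr 1 <;> first | ring1 | module

end R6

/-- For every `γ` in `R`, `chI(γ) + chJ(γ) = (∫ γ·Td(X))·1 − γ`: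
the two relative Fourier–Mukai transforms add up to the Kontsevich conifold
transform with kernel the ideal sheaf of the diagonal of `X × X`. -/
theorem chI_add_chJ {A2 : Type*} [AddCommGroup A2] [Module ℚ A2]
    (B : A2 →ₗ[ℚ] A2 →ₗ[ℚ] ℚ) (hB : ∀ u v : A2, B u v = B v u) (c1 : A2)
    (c2 : ℚ) (γ : R6 A2) :
    R6.chI B c1 γ + R6.chJ B c1 c2 γ =
      R6.Int (R6.mul B c1 γ (R6.TdX B c1 c2)) • (1 : R6 A2) - γ := by
  rw [R6.chI_add_chJ_eq, R6.int_mul_tdX, hB γ.S c1]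
end

section
/- For the degree-8 model, for each divisor D in {L, H} (where H := E + 2L), the map Phi^{-1} ∘ twist_D ∘ Phi on the BPS charge space Q^6 is Q-linear and its matrix equals the inverse transpose (S_D^{-1})^t of the monodromy matrix S_D (equivalently (S_D^t)^{-1}). This verifies Kontsevich's proposed correspondence between the monodromy about the divisor D_D in moduli space and tensoring by the line bundle O_X(D), with period monodromies acting on the charge lattice by inverse transpose. -/
/-!
Solving the dictionary `Φ` for `n` shows that it is a bijection, so `T_D := Φ⁻¹ ∘ twist_D ∘ Φ` is a
well-defined map on `ℚ⁶`. A direct computation with the intersection numbers shows that the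
transposed monodromy undoes it: `S_Dᵀ (T_D n) = n`. So `S_Dᵀ` is surjective, hence invertible, and
`T_D = (S_Dᵀ)⁻¹ = (S_D⁻¹)ᵀ`.
-/

open Matrix

/-- Topological invariants (Chern data) of a sheaf `V` on the two-parameter
Calabi–Yau `X = P^4_{1,1,2,2,2}[8]`: the rank, `ch1 = c1E·E + c1L·L` in the
divisor basis `(E, L)`, `ch2 = c2h·h + c2l·l` in the curve basis `(h, l)`,
and `ch3 ∈ ℚ`. -/
structure ChernData where
  r : ℚ
  c1E : ℚ
  c1L : ℚ
  c2h : ℚ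
  c2l : ℚ
  c3 : ℚ

/-- Product of two divisor classes (coordinates in the basis `(E, L)`) as a
curve class (coordinates in the basis `(h, l)`), for the degree-8 model:
`E·E = −8h + 4l`, `E·L = 4h`, `L·L = 0`. -/
def divMul8 (d e : ℚ × ℚ) : ℚ × ℚ :=
  (-8 * d.1 * e.1 + 4 * (d.1 * e.2 + d.2 * e.1), 4 * d.1 * e.1)

/-- Intersection number of a divisor class with a curve class:
`E·h = 1`, `E·l = −2`, `L·h = 0`, `L·l = 1`. -/
def divCurve (d c : ℚ × ℚ) : ℚ := d.1 * c.1 - 2 * d.1 * c.2 + d.2 * c.2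

/-- The degree-8 BPS charge dictionary `Φ`, sending
`n = (n6, n4^1, n4^2, n0, n2^1, n2^2)` to the Chern data with `r = n6`,
`ch1 = n4^1·E + n4^2·L`, `ch2 = (4n4^1 − 2n4^2 + n2^1)·h + (−2n4^1 + n2^2)·l`,
`ch3 = −n0 − (2/3)n4^1 − 2n4^2`. -/
def Phi8 (n : Fin 6 → ℚ) : ChernData :=
  ⟨n 0, n 1, n 2, 4 * n 1 - 2 * n 2 + n 4, -2 * n 1 + n 5,
   -(n 3) - (2/3) * n 1 - 2 * n 2⟩

/-- Twisting by the line bundle `O_X(D)` (degree-8 intersection products):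
`(r, ch1, ch2, ch3) ↦ (r, ch1 + rD, ch2 + ch1·D + (r/2)D²,
ch3 + ch2·D + (1/2)ch1·D² + (r/6)D³)`. -/
def twist8 (D : ℚ × ℚ) (c : ChernData) : ChernData :=
  ⟨c.r, c.c1E + c.r * D.1, c.c1L + c.r * D.2,
   c.c2h + (divMul8 (c.c1E, c.c1L) D).1 + (c.r / 2) * (divMul8 D D).1,
   c.c2l + (divMul8 (c.c1E, c.c1L) D).2 + (c.r / 2) * (divMul8 D D).2,
   c.c3 + divCurve D (c.c2h, c.c2l) + (1/2) * divCurve (c.c1E, c.c1L) (divMul8 D D)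
     + (c.r / 6) * divCurve D (divMul8 D D)⟩

/-- Degree-8 monodromy matrix `S_L`, on the lattice ordered
`(n6, n4^1, n4^2, n0, n2^1, n2^2)`. -/
def SL8 : Matrix (Fin 6) (Fin 6) ℚ :=
  !![1,0,-1,2,-2,0; 0,1,0,-2,-4,0; 0,0,1,0,0,0;
     0,0,0,1,0,0; 0,0,0,0,1,0; 0,0,0,1,0,1]

/-- Degree-8 monodromy matrix `S_H`. -/
def SH8 : Matrix (Fin 6) (Fin 6) ℚ :=
  !![1,-1,-2,6,4,0; 0,1,0,4,0,-4; 0,0,1,-4,-4,0;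
     0,0,0,1,0,0; 0,0,0,1,1,0; 0,0,0,0,0,1]

theorem Matrix.eq_inv_mulVec_of_mulVec_eq {m R : Type*} [Fintype m] [DecidableEq m]
    [CommRing R] {A : Matrix m m R} {f : (m → R) → m → R} (hf : ∀ v, A *ᵥ f v = v)
    (v : m → R) : f v = A⁻¹ *ᵥ v := by
  have hA : IsUnit A.det :=
    (isUnit_iff_isUnit_det A).1 (mulVec_surjective_iff_isUnit.1 fun v ↦ ⟨f v, hf v⟩)
  rw [← hf v, mulVec_mulVec, nonsing_inv_mul A hA, one_mulVec, hf]

theorem Equiv.conj_eq_inv_transpose_mulVec {m R α : Type*} [Fintype m] [DecidableEq m]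
    [CommRing R] (Φ : (m → R) ≃ α) {g : α → α} {S : Matrix m m R}
    (h : ∀ v, Sᵀ *ᵥ Φ.symm (g (Φ v)) = v) (v : m → R) : g (Φ v) = Φ ((S⁻¹)ᵀ *ᵥ v) := by
  rw [transpose_nonsing_inv, ← eq_inv_mulVec_of_mulVec_eq h, Φ.apply_symm_apply]

def phi8Equiv : (Fin 6 → ℚ) ≃ ChernData where
  toFun := Phi8
  invFun c := ![c.r, c.c1E, c.c1L, -(c.c3 + (2/3) * c.c1E + 2 * c.c1L),
    c.c2h - 4 * c.c1E + 2 * c.c1L, c.c2l + 2 * c.c1E]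
  left_inv n := by
    ext i
    fin_cases i <;> simp [Phi8] <;> ring
  right_inv c := by
    simp [Phi8]
    ring_nf

theorem SL8_transpose_mulVec_twist8 (n : Fin 6 → ℚ) :
    SL8ᵀ *ᵥ phi8Equiv.symm (twist8 (0, 1) (Phi8 n)) = n := by
  ext i
  fin_cases i <;>
    simp [phi8Equiv, SL8, twist8, Phi8, divMul8, divCurve, mulVec_transpose, vecMul,
      dotProduct, Fin.sum_univ_succ] <;>
    ring

theorem SH8_transpose_mulVec_twist8 (n : Fin 6 → ℚ) :
    SH8ᵀ *ᵥ phi8Equiv.symm (twist8 (1, 2) (Phi8 n)) = n := by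
  ext i
  fin_cases i <;>
    simp [phi8Equiv, SH8, twist8, Phi8, divMul8, divCurve, mulVec_transpose, vecMul,
      dotProduct, Fin.sum_univ_succ] <;>
    ring

/-- For the degree-8 model, for each divisor `D ∈ {L, H}`
(where `H = E + 2L`, i.e. `L = (0,1)` and `H = (1,2)` in the basis `(E,L)`),
the map `Φ⁻¹ ∘ twist_D ∘ Φ` on the BPS charge space `ℚ⁶` is ℚ-linear with
matrix the inverse transpose `(S_D⁻¹)ᵀ` of the monodromy matrix `S_D`:
Kontsevich's correspondence between the monodromy about the divisor `D_D` in
moduli space and tensoring by `O_X(D)`, with period monodromies acting on the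
charge lattice by inverse transpose. -/
theorem degree8_monodromy_is_twist :
    Function.Bijective Phi8 ∧
    (∀ n : Fin 6 → ℚ, twist8 (0, 1) (Phi8 n) = Phi8 ((SL8⁻¹)ᵀ.mulVec n)) ∧
    (∀ n : Fin 6 → ℚ, twist8 (1, 2) (Phi8 n) = Phi8 ((SH8⁻¹)ᵀ.mulVec n)) :=
  ⟨phi8Equiv.bijective,
    phi8Equiv.conj_eq_inv_transpose_mulVec SL8_transpose_mulVec_twist8,
    phi8Equiv.conj_eq_inv_transpose_mulVec SH8_transpose_mulVec_twist8⟩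
end
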